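/- arXiv:2409.14678 — 5 statements merged into one kernel-verified Lean document; each statement's English description precedes it below -/
import Mathlib

section
/- Let M be an (m+n)×n integer matrix whose every n×n submatrix has determinant in {−1,0,1}, and suppose the bottom n rows of M form the identity matrix I_n. Then every square submatrix of M (of any size) has determinant in {−1,0,1}; i.e., M is totally unimodular. -/
/-- If `M` is an `(m+n) × n` integer matrix whose every `n × n` submatrix has
determinant in `{-1,0,1}`, and the bottom `n` rows of `M` form the identity matrix, then `M`
is totally unimodular. -/
theorem stmt0 (m n : ℕ) (M : Matrix (Fin (m + n)) (Fin n) ℤ)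
    (hmax : ∀ f : Fin n → Fin (m + n), Function.Injective f →
      (M.submatrix f id).det ∈ ({-1, 0, 1} : Set ℤ))
    (hid : ∀ i j : Fin n, M (Fin.natAdd m i) j = if i = j then 1 else 0) :
    M.IsTotallyUnimodular := by
  classical
  intro k f g hf hg
  by_cases hz : ∃ (i : Fin k) (j : Fin n), f i = Fin.natAdd m j ∧ ∀ i', g i' ≠ j
  · obtain ⟨i, j, hij, hj⟩ := hz
    refine ⟨0, ?_⟩
    rw [SignType.coe_zero]
    symm
    apply Matrix.det_eq_zero_of_row_eq_zero i
    intro i'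
    have : M (f i) (g i') = 0 := by
      rw [hij, hid]
      simp [Ne.symm (hj i')]
    simpa [Matrix.submatrix_apply] using this
  · push_neg at hz
    set F : Fin n → Fin (m + n) :=
      fun j => if h : ∃ i, g i = j then f h.choose else Fin.natAdd m j with hF
    have hFg : ∀ i, F (g i) = f i := by
      intro i
      have h : ∃ i', g i' = g i := ⟨i, rfl⟩
      simp only [hF, dif_pos h]
      exact congrArg f (hg h.choose_spec)
    have hFn : ∀ j, (¬ ∃ i, g i = j) → F j = Fin.natAdd m j := by
      intro j hj
      simp only [hF, dif_neg hj]
    have hFinj : Function.Injective F := by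
      intro j₁ j₂ h
      by_cases h₁ : ∃ i, g i = j₁ <;> by_cases h₂ : ∃ i, g i = j₂
      · rw [hF] at h
        simp only [dif_pos h₁, dif_pos h₂] at h
        rw [← h₁.choose_spec, ← h₂.choose_spec, hf h]
      · rw [hF] at h
        simp only [dif_pos h₁, dif_neg h₂] at h
        exact absurd (hz _ _ h) h₂
      · rw [hF] at h
        simp only [dif_neg h₁, dif_pos h₂] at h
        exact absurd (hz _ _ h.symm) h₁
      · rw [hFn _ h₁, hFn _ h₂] at h
        have := congrArg Fin.val h
        simp only [Fin.natAdd] at this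
        exact Fin.ext (by omega)
    have hdet := hmax F hFinj
    -- the reindexing equivalence
    let e : (Fin k ⊕ {j : Fin n // ¬ j ∈ Set.range g}) ≃ Fin n :=
      ((Equiv.ofInjective g hg).sumCongr (Equiv.refl _)).trans
        (Equiv.sumCompl (· ∈ Set.range g))
    have hblock : (M.submatrix F id).submatrix e e =
        Matrix.fromBlocks (M.submatrix f g) (Matrix.of fun i b => M (f i) b.val) 0 1 := by
      ext (i | a) (i' | b)
      · simp [e, Matrix.submatrix_apply, hFg]
      · simp [e, Matrix.submatrix_apply, hFg]
      · have ha : ¬ ∃ i, g i = (a : Fin n) := by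
          rcases a with ⟨a, ha⟩
          simpa [Set.mem_range] using ha
        have : M (F a) (g i') = 0 := by
          rw [hFn _ ha, hid]
          have : (a : Fin n) ≠ g i' := fun hc => ha ⟨i', hc.symm⟩
          simp [this]
        simpa [e, Matrix.submatrix_apply] using this
      · have ha : ¬ ∃ i, g i = (a : Fin n) := by
          rcases a with ⟨a, ha⟩
          simpa [Set.mem_range] using ha
        have : M (F a) (b : Fin n) = if a = b then 1 else 0 := by
          rw [hFn _ ha, hid]
          simp [Subtype.ext_iff]
        simpa [e, Matrix.submatrix_apply, Matrix.one_apply] using this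
    have hdet2 : (M.submatrix F id).det = (M.submatrix f g).det := by
      rw [← Matrix.det_submatrix_equiv_self e, hblock,
        Matrix.det_fromBlocks_zero₂₁, Matrix.det_one, mul_one]
    rw [hdet2] at hdet
    rcases hdet with h | h | h
    · exact ⟨-1, by simpa using h.symm⟩
    · exact ⟨0, by simpa using h.symm⟩
    · exact ⟨1, by simpa using h.symm⟩
end

section
/- Let M be an m×n totally unimodular matrix whose first row has first entry equal to 1. Define a new matrix M′ column by column: for each column j ≥ 2 with M(1,j) = 0, replace column j by either (column j) − (column 1) or (column j) + (column 1), choosing the option whose entries all lie in {−1,0,1}; for columns j with M(1,j) ≠ 0, leave the column unchanged. Then at least one of the two choices always has all entries in {−1,0,1}; i.e., for every j ≥ 2 with M(1,j)=0, either all entries of column j minus column 1 lie in {−1,0,1}, or all entries of column j plus column 1 lie in {−1,0,1}. -/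
lemma entry_cases {m' n' : Type*} (M : Matrix m' n' ℤ) (hTU : M.IsTotallyUnimodular)
    (i : m') (j : n') : M i j = -1 ∨ M i j = 0 ∨ M i j = 1 := by
  obtain ⟨s, hs⟩ := hTU.apply i j
  cases s <;> simp at hs <;> omega

/-- Let `M` be a totally unimodular `(m+1) × (n+1)` matrix with `M 0 0 = 1`.
Then for every column `j ≠ 0` with `M 0 j = 0`, either all entries of (column `j` minus
column `0`) lie in `{-1,0,1}`, or all entries of (column `j` plus column `0`) lie in
`{-1,0,1}`. -/
theorem stmt2 (m n : ℕ) (M : Matrix (Fin (m + 1)) (Fin (n + 1)) ℤ)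
    (hTU : M.IsTotallyUnimodular) (h00 : M 0 0 = 1) :
    ∀ j : Fin (n + 1), j ≠ 0 → M 0 j = 0 →
      (∀ i, M i j - M i 0 ∈ ({-1, 0, 1} : Set ℤ)) ∨
      (∀ i, M i j + M i 0 ∈ ({-1, 0, 1} : Set ℤ)) := by
  intro j hj hj0
  by_contra hcon
  push_neg at hcon
  obtain ⟨⟨i₁, hi₁⟩, ⟨i₂, hi₂⟩⟩ := hcon
  simp only [Set.mem_insert_iff, Set.mem_singleton_iff, not_or] at hi₁ hi₂
  have e10 := entry_cases M hTU i₁ 0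
  have e1j := entry_cases M hTU i₁ j
  have e20 := entry_cases M hTU i₂ 0
  have e2j := entry_cases M hTU i₂ j
  have hp1 : M i₁ 0 * M i₁ j = -1 := by
    rcases e10 with h|h|h <;> rcases e1j with h'|h'|h' <;>
      rw [h, h'] <;> rw [h, h'] at hi₁ <;> omega
  have hp2 : M i₂ 0 * M i₂ j = 1 := by
    rcases e20 with h|h|h <;> rcases e2j with h'|h'|h' <;>
      rw [h, h'] <;> rw [h, h'] at hi₂ <;> omega
  have hne : i₁ ≠ i₂ := by rintro rfl; omega
  have hdet := hTU 2 ![i₁, i₂] ![0, j] ?_ ?_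
  · obtain ⟨s, hs⟩ := hdet
    rw [Matrix.det_fin_two] at hs
    simp only [Matrix.submatrix_apply, Matrix.cons_val_zero, Matrix.cons_val_one,
      Matrix.head_cons] at hs
    have hsv : (s : ℤ) = -1 ∨ (s : ℤ) = 0 ∨ (s : ℤ) = 1 := by cases s <;> simp
    rcases hsv with hsv|hsv|hsv <;>
      rcases e10 with h|h|h <;> rcases e1j with h'|h'|h' <;>
      rcases e20 with h2|h2|h2 <;> rcases e2j with h2'|h2'|h2' <;>
      simp only [h, h', h2, h2'] at hs hp1 hp2 <;> omega
  · intro a b hab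
    fin_cases a <;> fin_cases b <;>
      simp only [Matrix.cons_val_zero, Matrix.cons_val_one, Matrix.head_cons] at hab <;>
      first | rfl | exact absurd hab hne | exact absurd hab.symm hne
  · intro a b hab
    fin_cases a <;> fin_cases b <;>
      simp only [Matrix.cons_val_zero, Matrix.cons_val_one, Matrix.head_cons] at hab <;>
      first | rfl | exact absurd hab.symm hj | exact absurd hab hj
end

section
/- Let A be a t×t integer matrix with entries in {−1,0,1} and det(A) ≠ 0, satisfying the property that for any two columns c, c′ of A, at least one of c+c′ and c−c′ has all entries in {−1,0,1}, and this property is preserved under the column operations used (adding or subtracting one column from another when the resulting entries stay in {−1,0,1}). Then det(A) = ±1. -/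
/-- One elementary column operation: add `ε = ±1` times column `k` to column `j ≠ k`,
provided the resulting matrix still has all entries in `{-1,0,1}`. -/
def ColStep (t : ℕ) (B B' : Matrix (Fin t) (Fin t) ℤ) : Prop :=
  ∃ (j k : Fin t) (ε : ℤ), j ≠ k ∧ (ε = 1 ∨ ε = -1) ∧
    (∀ i l, B' i l = if l = j then B i j + ε * B i k else B i l) ∧
    (∀ i l, B' i l ∈ ({-1, 0, 1} : Set ℤ))

namespace Stmt3Aux

open Matrix Relation

lemma memS_iff (x : ℤ) : x ∈ ({-1, 0, 1} : Set ℤ) ↔ x = -1 ∨ x = 0 ∨ x = 1 := by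
  simp [Set.mem_insert_iff]

lemma colStep_det {t : ℕ} {B B' : Matrix (Fin t) (Fin t) ℤ} (h : ColStep t B B') :
    B'.det = B.det := by
  obtain ⟨j, k, ε, hjk, hε, hdef, _⟩ := h
  have hBB : B' = B.updateCol j (fun i => B i j + ε • B i k) := by
    ext i l
    rw [hdef, Matrix.updateCol_apply]
    simp [smul_eq_mul]
  rw [hBB]
  exact Matrix.det_updateCol_add_smul_self B hjk ε

lemma reach_det {t : ℕ} {A B : Matrix (Fin t) (Fin t) ℤ}
    (h : Relation.ReflTransGen (ColStep t) A B) : B.det = A.det := by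
  induction h with
  | refl => rfl
  | tail _ hstep ih => rw [colStep_det hstep, ih]

lemma reach_entries {t : ℕ} {A B : Matrix (Fin t) (Fin t) ℤ}
    (hA : ∀ i j, A i j ∈ ({-1, 0, 1} : Set ℤ))
    (h : Relation.ReflTransGen (ColStep t) A B) :
    ∀ i j, B i j ∈ ({-1, 0, 1} : Set ℤ) := by
  induction h with
  | refl => exact hA
  | tail _ hstep _ => exact hstep.choose_spec.choose_spec.choose_spec.2.2.2

lemma main : ∀ (t : ℕ) (A : Matrix (Fin t) (Fin t) ℤ),
    (∀ i j, A i j ∈ ({-1, 0, 1} : Set ℤ)) →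
    A.det ≠ 0 →
    (∀ B : Matrix (Fin t) (Fin t) ℤ, Relation.ReflTransGen (ColStep t) A B →
      ∀ c c' : Fin t, c ≠ c' →
        (∀ i, B i c + B i c' ∈ ({-1, 0, 1} : Set ℤ)) ∨
        (∀ i, B i c - B i c' ∈ ({-1, 0, 1} : Set ℤ))) →
    A.det = 1 ∨ A.det = -1 := by
  intro t
  induction t with
  | zero =>
    intro A _ _ _
    left
    exact Matrix.det_fin_zero
  | succ n ih =>
    intro A hent hdet hcols
    classical
    -- pivot in row 0
    have hpiv : ∃ k : Fin (n + 1), A 0 k ≠ 0 := by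
      by_contra h
      push_neg at h
      exact hdet (Matrix.det_eq_zero_of_row_eq_zero 0 h)
    obtain ⟨k, hk⟩ := hpiv
    -- elimination of row 0 outside the pivot column
    have elim : ∀ (m : ℕ) (B : Matrix (Fin (n+1)) (Fin (n+1)) ℤ),
        Relation.ReflTransGen (ColStep (n+1)) A B → B 0 k ≠ 0 →
        (Finset.univ.filter (fun j => j ≠ k ∧ B 0 j ≠ 0)).card ≤ m →
        ∃ C, Relation.ReflTransGen (ColStep (n+1)) A C ∧ C 0 k ≠ 0 ∧
          ∀ j, j ≠ k → C 0 j = 0 := by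
      intro m
      induction m with
      | zero =>
        intro B hB hBk hcard
        refine ⟨B, hB, hBk, fun j hj => ?_⟩
        by_contra h0
        have hmem : j ∈ Finset.univ.filter (fun j => j ≠ k ∧ B 0 j ≠ 0) := by
          simp [hj, h0]
        have := Finset.card_pos.mpr ⟨j, hmem⟩
        omega
      | succ m ihm =>
        intro B hB hBk hcard
        by_cases hemp : ∀ j, j ≠ k → B 0 j = 0
        · exact ⟨B, hB, hBk, hemp⟩
        · push_neg at hemp
          obtain ⟨j, hjk, hj0⟩ := hemp
          have hBent := reach_entries hent hB
          have hBj1 : B 0 j = 1 ∨ B 0 j = -1 := by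
            have := (memS_iff _).mp (hBent 0 j); omega
          have hBk1 : B 0 k = 1 ∨ B 0 k = -1 := by
            have := (memS_iff _).mp (hBent 0 k); omega
          -- the cancelling sign
          set ε : ℤ := -(B 0 j * B 0 k) with hεdef
          have hε : ε = 1 ∨ ε = -1 := by
            rcases hBj1 with h1 | h1 <;> rcases hBk1 with h2 | h2 <;>
              simp [hεdef, h1, h2]
          have hcancel : B 0 j + ε * B 0 k = 0 := by
            rcases hBj1 with h1 | h1 <;> rcases hBk1 with h2 | h2 <;>
              simp [hεdef, h1, h2]
          have hmemcol : ∀ i, B i j + ε * B i k ∈ ({-1, 0, 1} : Set ℤ) := by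
            rcases hcols B hB j k hjk with hs | hd
            · have hε1 : ε = 1 := by
                rcases hε with h | h
                · exact h
                · exfalso
                  have := (memS_iff _).mp (hs 0)
                  rcases hBj1 with h1 | h1 <;> rcases hBk1 with h2 | h2 <;>
                    simp [hεdef, h1, h2] at h <;> omega
              intro i
              simpa [hε1] using hs i
            · have hε1 : ε = -1 := by
                rcases hε with h | h
                · exfalso
                  have := (memS_iff _).mp (hd 0)
                  rcases hBj1 with h1 | h1 <;> rcases hBk1 with h2 | h2 <;>
                    simp [hεdef, h1, h2] at h <;> omega
                · exact h
              intro i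
              have := hd i
              have : B i j + ε * B i k = B i j - B i k := by rw [hε1]; ring
              rw [this]
              exact hd i
          set B' : Matrix (Fin (n+1)) (Fin (n+1)) ℤ :=
            Matrix.of (fun i l => if l = j then B i j + ε * B i k else B i l) with hB'def
          have hdefB' : ∀ i l, B' i l = if l = j then B i j + ε * B i k else B i l :=
            fun i l => rfl
          have hmemB' : ∀ i l, B' i l ∈ ({-1, 0, 1} : Set ℤ) := by
            intro i l
            rw [hdefB']
            split
            · exact hmemcol i
            · exact hBent i l
          have hstep : ColStep (n+1) B B' := ⟨j, k, ε, hjk, hε, hdefB', hmemB'⟩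
          have hB' : Relation.ReflTransGen (ColStep (n+1)) A B' := hB.tail hstep
          have hB'k : B' 0 k ≠ 0 := by
            rw [hdefB']
            simpa [Ne.symm hjk] using hBk
          -- cardinal decreases
          have hsub : (Finset.univ.filter (fun l => l ≠ k ∧ B' 0 l ≠ 0)) ⊆
              (Finset.univ.filter (fun l => l ≠ k ∧ B 0 l ≠ 0)).erase j := by
            intro l hl
            simp only [Finset.mem_filter, Finset.mem_univ, true_and] at hl
            obtain ⟨hlk, hl0⟩ := hl
            have hlj : l ≠ j := by
              intro h
              apply hl0
              rw [h, hdefB']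
              simpa using hcancel
            rw [Finset.mem_erase]
            refine ⟨hlj, ?_⟩
            simp only [Finset.mem_filter, Finset.mem_univ, true_and]
            refine ⟨hlk, ?_⟩
            rw [hdefB', if_neg hlj] at hl0
            exact hl0
          have hjmem : j ∈ Finset.univ.filter (fun l => l ≠ k ∧ B 0 l ≠ 0) := by
            simp [hjk, hj0]
          have hcard' : (Finset.univ.filter (fun l => l ≠ k ∧ B' 0 l ≠ 0)).card ≤ m := by
            have h1 := Finset.card_le_card hsub
            rw [Finset.card_erase_of_mem hjmem] at h1
            omega
          exact ihm B' hB' hB'k hcard'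
    obtain ⟨C, hC, hCk, hCrow⟩ := elim (n+1) A (Relation.ReflTransGen.refl) hk
      (le_trans (Finset.card_filter_le _ _) (by simp))
    have hCent := reach_entries hent hC
    set M : Matrix (Fin n) (Fin n) ℤ := C.submatrix Fin.succ k.succAbove with hMdef
    -- determinant expansion
    have hdetC : C.det = (-1) ^ (k : ℕ) * C 0 k * M.det := by
      rw [Matrix.det_succ_row_zero, Finset.sum_eq_single k]
      · intro j _ hjk
        rw [hCrow j hjk]
        ring
      · intro h
        exact absurd (Finset.mem_univ k) h
    have hdetCA : C.det = A.det := reach_det hC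
    have hdetM : M.det ≠ 0 := by
      intro h
      rw [h, mul_zero] at hdetC
      exact hdet (hdetCA ▸ hdetC)
    have hMent : ∀ i j, M i j ∈ ({-1, 0, 1} : Set ℤ) := fun i j => hCent _ _
    -- lifting of column operations from the minor
    have lift : ∀ M', Relation.ReflTransGen (ColStep n) M M' →
        ∃ C', Relation.ReflTransGen (ColStep (n+1)) A C' ∧
          (∀ l, l ≠ k → C' 0 l = 0) ∧
          (∀ (i : Fin n) (j : Fin n), C' i.succ (k.succAbove j) = M' i j) := by
      intro M' hM'
      induction hM' with
      | refl => exact ⟨C, hC, hCrow, fun i j => rfl⟩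
      | tail hreach hstep ihl =>
        obtain ⟨C₁, hC₁, hrow₁, hsub₁⟩ := ihl
        obtain ⟨j, k', ε, hjk', hε, hdef, hmem⟩ := hstep
        rename_i M₁ M₂
        have hC₁ent := reach_entries hent hC₁
        have hne : k.succAbove j ≠ k.succAbove k' :=
          fun h => hjk' (Fin.succAbove_right_injective h)
        set C₂ : Matrix (Fin (n+1)) (Fin (n+1)) ℤ :=
          Matrix.of (fun i l => if l = k.succAbove j then
            C₁ i (k.succAbove j) + ε * C₁ i (k.succAbove k') else C₁ i l) with hC₂def
        have hdef₂ : ∀ i l, C₂ i l = if l = k.succAbove j then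
            C₁ i (k.succAbove j) + ε * C₁ i (k.succAbove k') else C₁ i l := fun i l => rfl
        have hmem₂ : ∀ i l, C₂ i l ∈ ({-1, 0, 1} : Set ℤ) := by
          intro i l
          rw [hdef₂]
          split
          · induction i using Fin.cases with
            | zero =>
              rw [hrow₁ _ (Fin.succAbove_ne k j), hrow₁ _ (Fin.succAbove_ne k k')]
              simp [memS_iff]
            | succ i' =>
              rw [hsub₁, hsub₁]
              have h2 := hmem i' j
              rw [hdef i' j, if_pos rfl] at h2
              exact h2
          · exact hC₁ent i l
        have hstep₂ : ColStep (n+1) C₁ C₂ :=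
          ⟨k.succAbove j, k.succAbove k', ε, hne, hε, hdef₂, hmem₂⟩
        refine ⟨C₂, hC₁.tail hstep₂, ?_, ?_⟩
        · intro l hl
          rw [hdef₂]
          split
          · rw [hrow₁ _ (Fin.succAbove_ne k j), hrow₁ _ (Fin.succAbove_ne k k')]
            ring
          · exact hrow₁ l hl
        · intro i j''
          rw [hdef₂, hdef i j'']
          by_cases h : j'' = j
          · rw [if_pos (by rw [h]), if_pos h, hsub₁, hsub₁]
          · rw [if_neg (fun hh => h (Fin.succAbove_right_injective hh)), if_neg h, hsub₁]
    -- pair condition for the minor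
    have hMcols : ∀ M' : Matrix (Fin n) (Fin n) ℤ, Relation.ReflTransGen (ColStep n) M M' →
        ∀ c c' : Fin n, c ≠ c' →
          (∀ i, M' i c + M' i c' ∈ ({-1, 0, 1} : Set ℤ)) ∨
          (∀ i, M' i c - M' i c' ∈ ({-1, 0, 1} : Set ℤ)) := by
      intro M' hM' c c' hcc
      obtain ⟨C', hC', _, hsub'⟩ := lift M' hM'
      have hne : k.succAbove c ≠ k.succAbove c' :=
        fun h => hcc (Fin.succAbove_right_injective h)
      rcases hcols C' hC' (k.succAbove c) (k.succAbove c') hne with hs | hd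
      · left
        intro i
        have := hs i.succ
        rwa [hsub', hsub'] at this
      · right
        intro i
        have := hd i.succ
        rwa [hsub', hsub'] at this
    have hM1 := ih M hMent hdetM hMcols
    -- conclude
    have hC0k : C 0 k = 1 ∨ C 0 k = -1 := by
      have := (memS_iff _).mp (hCent 0 k); omega
    have hpow : ((-1 : ℤ)) ^ (k : ℕ) = 1 ∨ ((-1 : ℤ)) ^ (k : ℕ) = -1 :=
      neg_one_pow_eq_or ℤ _
    rw [← hdetCA, hdetC]
    rcases hpow with h1 | h1 <;> rcases hC0k with h2 | h2 <;> rcases hM1 with h3 | h3 <;>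
      rw [h1, h2, h3] <;> norm_num

end Stmt3Aux

/-- Let `A` be a `t × t` integer matrix with entries in `{-1,0,1}` and
`det A ≠ 0`, such that for every matrix `B` obtained from `A` by the column operations above,
any two distinct columns `c, c'` of `B` satisfy: at least one of `c + c'` and `c - c'` has all
entries in `{-1,0,1}`. Then `det A = ±1`. -/
theorem stmt3 (t : ℕ) (A : Matrix (Fin t) (Fin t) ℤ)
    (hent : ∀ i j, A i j ∈ ({-1, 0, 1} : Set ℤ))
    (hdet : A.det ≠ 0)
    (hcols : ∀ B : Matrix (Fin t) (Fin t) ℤ, Relation.ReflTransGen (ColStep t) A B →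
      ∀ c c' : Fin t, c ≠ c' →
        (∀ i, B i c + B i c' ∈ ({-1, 0, 1} : Set ℤ)) ∨
        (∀ i, B i c - B i c' ∈ ({-1, 0, 1} : Set ℤ))) :
    A.det = 1 ∨ A.det = -1 :=
  Stmt3Aux.main t A hent hdet hcols
end

section
/- Let M be an (m+n)×n totally unimodular matrix whose square submatrices of size n×n include one equal (after row permutation) to an invertible matrix N with det(N) = ±1. Then every entry of M·N⁻¹ lies in {−1,0,1}. -/
/-- Let `M` be an `(m+n) × n` totally unimodular integer matrix and let `N` be
an `n × n` submatrix of `M` (given by a choice of `n` rows) with `det N = ±1`. Then every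
entry of `M * N⁻¹` lies in `{-1,0,1}`. -/
theorem stmt14 (m n : ℕ) (M : Matrix (Fin (m + n)) (Fin n) ℤ)
    (hTU : M.IsTotallyUnimodular)
    (f : Fin n → Fin (m + n)) (hf : Function.Injective f)
    (N : Matrix (Fin n) (Fin n) ℤ) (hN : N = M.submatrix f id)
    (hdet : N.det = 1 ∨ N.det = -1) :
    ∀ i j, (M * N⁻¹) i j ∈ ({-1, 0, 1} : Set ℤ) := by
  intro i j
  have hNinv : N⁻¹ = N.det • N.adjugate := by
    rw [Matrix.inv_def]
    have h1 : Ring.inverse (1 : ℤ) = 1 := Ring.inverse_one ℤ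
    have h2 : Ring.inverse (-1 : ℤ) = -1 := by
      rw [show (-1 : ℤ) = ((-1 : ℤˣ) : ℤ) from rfl, Ring.inverse_unit]; rfl
    rcases hdet with h | h <;> rw [h] <;> simp [h1, h2]
  have key : (M * N.adjugate) i j = (N.updateRow j (M i)).det := by
    have hMi : M i = ∑ k, M i k • Pi.single k (1 : ℤ) := by
      ext c; simp [Pi.single_apply]
    rw [Matrix.mul_apply, ← Matrix.cramer_transpose_apply]
    conv_rhs => rw [hMi]
    rw [map_sum]
    simp only [Matrix.adjugate, Matrix.of_apply, LinearMap.map_smul]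
    simp [Finset.sum_apply, smul_eq_mul]
  have hsub : N.updateRow j (M i) = M.submatrix (Function.update f j i) id := by
    ext r c
    rcases eq_or_ne r j with rfl | hrj
    · simp [Matrix.updateRow_apply]
    · simp [Matrix.updateRow_apply, hrj, hN, Function.update_apply]
  obtain ⟨s, hs⟩ := (M.isTotallyUnimodular_iff.mp hTU) n (Function.update f j i) id
  have hval : (M * N⁻¹) i j = N.det * (s : ℤ) := by
    rw [hNinv, Matrix.mul_smul, Matrix.smul_apply, key, hsub, ← hs, smul_eq_mul]
  rw [hval]
  rcases hdet with h | h <;> rw [h] <;> cases s <;> simp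
end

section
/- Let M be an m×n totally unimodular matrix and let c₁,…,c_k be any collection of its columns. Then there exist signs ε₁,…,ε_k ∈ {−1,+1} such that every entry of ε₁c₁ + ⋯ + ε_k c_k lies in {−1,0,1}. -/
open Filter

/-- The polytope of fractional sign-choices. -/
def stmt15P {m k : ℕ} (A : Matrix (Fin m) (Fin k) ℤ) (l u : Fin m → ℤ) :
    Set (EuclideanSpace ℝ (Fin k)) :=
  {x | (∀ t, 0 ≤ x t ∧ x t ≤ 1) ∧
    ∀ i, (l i : ℝ) ≤ ∑ t, (A i t : ℝ) * x t ∧ ∑ t, (A i t : ℝ) * x t ≤ (u i : ℝ)}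

private lemma stmt15_evt_aux {cst slope lo hi : ℝ} (h1 : lo < cst) (h2 : cst < hi) :
    ∀ᶠ ε in nhds (0:ℝ), lo ≤ cst + ε * slope ∧ cst + ε * slope ≤ hi := by
  have hcont : Filter.Tendsto (fun ε : ℝ => cst + ε * slope) (nhds 0) (nhds cst) := by
    have h := (continuous_const.add (continuous_id.mul continuous_const)).tendsto (0:ℝ)
      (f := fun ε : ℝ => cst + ε * slope)
    simpa using h
  filter_upwards [hcont.eventually_const_lt h1, hcont.eventually_lt_const h2] with ε hε1 hε2
  exact ⟨hε1.le, hε2.le⟩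

private lemma stmt15_expand {m k : ℕ} (A : Matrix (Fin m) (Fin k) ℤ) (i : Fin m)
    (x z : EuclideanSpace ℝ (Fin k)) (ε : ℝ) :
    ∑ t, (A i t : ℝ) * (x + ε • z) t
      = (∑ t, (A i t : ℝ) * x t) + ε * ∑ t, (A i t : ℝ) * z t := by
  simp only [PiLp.add_apply, PiLp.smul_apply, smul_eq_mul, mul_add, Finset.sum_add_distrib,
    Finset.mul_sum]
  congr 1
  exact Finset.sum_congr rfl fun t _ => by ring

private lemma stmt15_caseA {m k : ℕ} (A : Matrix (Fin m) (Fin k) ℤ) (l u : Fin m → ℤ)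
    (x z : EuclideanSpace ℝ (Fin k))
    (hxP : x ∈ stmt15P A l u)
    (hz : z ≠ 0)
    (hsupp : ∀ t, ¬(0 < x t ∧ x t < 1) → z t = 0)
    (horth : ∀ i, ((∑ t, (A i t : ℝ) * x t = l i) ∨ (∑ t, (A i t : ℝ) * x t = u i)) →
      ∑ t, (A i t : ℝ) * z t = 0)
    (hext : ∀ x₁ ∈ stmt15P A l u, ∀ x₂ ∈ stmt15P A l u,
      x ∈ openSegment ℝ x₁ x₂ → x₁ = x ∧ x₂ = x) : False := by
  classical
  obtain ⟨hb, hrow⟩ := hxP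
  set S : Fin m → ℝ := fun i => ∑ t, (A i t : ℝ) * x t with hS
  set Z : Fin m → ℝ := fun i => ∑ t, (A i t : ℝ) * z t with hZ
  -- eventually conditions
  have hQt : ∀ t : Fin k, ∀ᶠ ε in nhds (0:ℝ),
      (0 ≤ x t + ε * z t ∧ x t + ε * z t ≤ 1) ∧
      (0 ≤ x t + ε * (-z t) ∧ x t + ε * (-z t) ≤ 1) := by
    intro t
    by_cases hp : 0 < x t ∧ x t < 1
    · exact (stmt15_evt_aux hp.1 hp.2).and (stmt15_evt_aux hp.1 hp.2)
    · have hzt := hsupp t hp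
      filter_upwards with ε
      simp [hzt, (hb t).1, (hb t).2]
  have hQi : ∀ i : Fin m, ∀ᶠ ε in nhds (0:ℝ),
      ((l i : ℝ) ≤ S i + ε * Z i ∧ S i + ε * Z i ≤ u i) ∧
      ((l i : ℝ) ≤ S i + ε * (-Z i) ∧ S i + ε * (-Z i) ≤ u i) := by
    intro i
    by_cases hp : S i = (l i : ℝ) ∨ S i = (u i : ℝ)
    · have hZi : Z i = 0 := horth i hp
      filter_upwards with ε
      simp [hZi, (hrow i).1, (hrow i).2]
      exact hrow i
    · push_neg at hp
      have h1 : (l i : ℝ) < S i := lt_of_le_of_ne (hrow i).1 (Ne.symm hp.1)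
      have h2 : S i < (u i : ℝ) := lt_of_le_of_ne (hrow i).2 hp.2
      exact (stmt15_evt_aux h1 h2).and (stmt15_evt_aux h1 h2)
  have hQ := (Filter.eventually_all.mpr hQt).and (Filter.eventually_all.mpr hQi)
  rw [Metric.eventually_nhds_iff] at hQ
  obtain ⟨δ, hδ, hδ'⟩ := hQ
  set ε := δ / 2 with hε
  have hεpos : 0 < ε := by positivity
  have hεδ : dist ε (0:ℝ) < δ := by
    rw [Real.dist_eq, sub_zero, abs_of_pos hεpos]
    linarith
  obtain ⟨hQ1, hQ2⟩ := hδ' hεδ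
  -- the two perturbed points
  have hmemp : x + ε • z ∈ stmt15P A l u := by
    constructor
    · intro t
      have h := (hQ1 t).1
      simpa [PiLp.add_apply, PiLp.smul_apply, smul_eq_mul] using h
    · intro i
      rw [stmt15_expand]
      exact (hQ2 i).1
  have hmemm : x + ε • (-z) ∈ stmt15P A l u := by
    constructor
    · intro t
      have h := (hQ1 t).2
      simpa [PiLp.add_apply, PiLp.smul_apply, smul_eq_mul] using h
    · intro i
      rw [stmt15_expand]
      have h := (hQ2 i).2
      have hZn : ∑ t, (A i t : ℝ) * (-z) t = -Z i := by
        simp [hZ, Finset.sum_neg_distrib]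
      rw [hZn]
      exact h
  have hseg : x ∈ openSegment ℝ (x + ε • z) (x + ε • (-z)) := by
    refine ⟨1/2, 1/2, by norm_num, by norm_num, by norm_num, ?_⟩
    module
  have := (hext _ hmemp _ hmemm hseg).1
  have hz0 : ε • z = 0 := by
    have h := congrArg (fun w => w - x) this
    simpa [add_sub_cancel_left] using h
  rcases smul_eq_zero.mp hz0 with h | h
  · exact absurd h (ne_of_gt hεpos)
  · exact hz h

private lemma stmt15_caseB {m k : ℕ} (A : Matrix (Fin m) (Fin k) ℤ)
    (hTU : A.IsTotallyUnimodular) (l u : Fin m → ℤ) (x : EuclideanSpace ℝ (Fin k))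
    (hb : ∀ t, 0 ≤ x t ∧ x t ≤ 1)
    (hrow : ∀ i, (l i : ℝ) ≤ ∑ t, (A i t : ℝ) * x t ∧ ∑ t, (A i t : ℝ) * x t ≤ (u i : ℝ))
    (hker : ∀ z : EuclideanSpace ℝ (Fin k), (∀ t, ¬(0 < x t ∧ x t < 1) → z t = 0) →
      (∀ i, ((∑ t, (A i t : ℝ) * x t = l i) ∨ (∑ t, (A i t : ℝ) * x t = u i)) →
        ∑ t, (A i t : ℝ) * z t = 0) → z = 0)
    (t₀ : Fin k) (ht₀ : 0 < x t₀ ∧ x t₀ < 1) : False := by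
  classical
  set S : Fin m → ℝ := fun i => ∑ t, (A i t : ℝ) * x t with hS
  set T : Set (Fin m) := {i | S i = (l i : ℝ) ∨ S i = (u i : ℝ)} with hT
  set σ := {t : Fin k // 0 < x t ∧ x t < 1} with hσ
  set W := EuclideanSpace ℝ σ with hW
  set r : Fin m → W := fun i => WithLp.toLp 2 (fun t : σ => (A i t.1 : ℝ) : σ → ℝ) with hr
  -- splitting sums over the predicate
  have hsplit : ∀ f : Fin k → ℝ,
      (∑ t : σ, f t.1) + (∑ t : {t : Fin k // ¬(0 < x t ∧ x t < 1)}, f t.1) = ∑ t, f t := by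
    intro f
    exact Fintype.sum_subtype_add_sum_subtype _ f
  -- the rows of tight constraints span everything
  have hspan : Submodule.span ℝ (r '' T) = ⊤ := by
    rw [← Submodule.orthogonal_eq_bot_iff, Submodule.eq_bot_iff]
    intro w hw
    set z : EuclideanSpace ℝ (Fin k) :=
      WithLp.toLp 2 (fun t => if h : 0 < x t ∧ x t < 1 then w ⟨t, h⟩ else 0 : Fin k → ℝ) with hz
    have hzsupp : ∀ t, ¬(0 < x t ∧ x t < 1) → z t = 0 := by
      intro t ht; simp [hz, dif_neg ht]
    have hzsum : ∀ i, ∑ t, (A i t : ℝ) * z t = ∑ t : σ, (A i t.1 : ℝ) * w t := by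
      intro i
      rw [← hsplit (fun t => (A i t : ℝ) * z t)]
      have h1 : ∀ t : σ, (A i t.1 : ℝ) * z t.1 = (A i t.1 : ℝ) * w t := by
        intro t
        have : z t.1 = w t := by
          simp only [hz, WithLp.ofLp_toLp]
          rw [dif_pos t.2]
        rw [this]
      have h2 : ∑ t : {t : Fin k // ¬(0 < x t ∧ x t < 1)}, (A i t.1 : ℝ) * z t.1 = 0 := by
        apply Finset.sum_eq_zero
        intro t _
        rw [hzsupp t.1 t.2, mul_zero]
      rw [Finset.sum_congr rfl fun t _ => h1 t, h2, add_zero]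
    have hzorth : ∀ i, (S i = (l i : ℝ) ∨ S i = (u i : ℝ)) → ∑ t, (A i t : ℝ) * z t = 0 := by
      intro i hi
      rw [hzsum i]
      have hri : r i ∈ Submodule.span ℝ (r '' T) :=
        Submodule.subset_span ⟨i, hi, rfl⟩
      have := hw (r i) hri
      rw [PiLp.inner_apply] at this
      simpa [hr, RCLike.inner_apply, conj_trivial, mul_comm] using this
    have hz0 : z = 0 := hker z hzsupp hzorth
    ext t
    have : z t.1 = 0 := congrArg (fun z : EuclideanSpace ℝ (Fin k) => z t.1) hz0
    simp only [hz, WithLp.ofLp_toLp] at this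
    rw [dif_pos t.2] at this
    simpa using this
  -- extract a basis among the tight rows
  obtain ⟨b, hbT, hbspan, hbind⟩ := exists_linearIndependent ℝ (r '' T)
  have hbfin : b.Finite := Set.Finite.subset (Set.toFinite (r '' T)) hbT
  letI : Fintype b := hbfin.fintype
  have hbtop : ⊤ ≤ Submodule.span ℝ (Set.range ((↑) : b → W)) := by
    rw [Subtype.range_coe_subtype]
    rw [show {x | x ∈ b} = b from rfl, hbspan, hspan]
  let basis : Module.Basis b ℝ W := Module.Basis.mk hbind hbtop
  have hcard : Fintype.card b = Fintype.card σ := by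
    have h1 := Module.finrank_eq_card_basis basis
    rw [finrank_euclideanSpace] at h1
    omega
  let e : b ≃ σ := Fintype.equivOfCardEq hcard
  have hbmem : ∀ v : b, ∃ i, i ∈ T ∧ r i = ↑v := by
    intro v
    obtain ⟨i, hiT, hri⟩ := hbT v.2
    exact ⟨i, hiT, hri⟩
  choose φ hφT hφr using hbmem
  -- the square integer matrix
  set N : Matrix b b ℤ := A.submatrix φ (fun w : b => (e w).1) with hN
  have hNdet : N.det ∈ Set.range SignType.cast :=
    (A.isTotallyUnimodular_iff_fintype.mp hTU) b φ (fun w : b => (e w).1)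
  -- rows of the real version of N are linearly independent
  let Ψ : W ≃ₗ[ℝ] (b → ℝ) :=
    (WithLp.linearEquiv 2 ℝ (σ → ℝ)).trans (LinearEquiv.funCongrLeft ℝ ℝ e)
  have hrows : (fun v : b => (N.map (Int.cast : ℤ → ℝ)) v) = (⇑Ψ.toLinearMap ∘ ((↑) : b → W)) := by
    funext v
    funext w
    show (N.map (Int.cast : ℤ → ℝ)) v w = Ψ (↑v : W) w
    rw [← hφr v]
    rfl
  have hindrows : LinearIndependent ℝ (fun v : b => (N.map (Int.cast : ℤ → ℝ)) v) := by
    rw [hrows]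
    exact hbind.map' Ψ.toLinearMap (LinearMap.ker_eq_bot.mpr Ψ.injective)
  have hunit : IsUnit (N.map (Int.cast : ℤ → ℝ)) :=
    Matrix.linearIndependent_rows_iff_isUnit.mp hindrows
  have hdetcast : ((N.det : ℤ) : ℝ) = (N.map (Int.cast : ℤ → ℝ)).det := by
    have := RingHom.map_det (Int.castRingHom ℝ) N
    simpa [RingHom.mapMatrix_apply] using this
  have hdetne : N.det ≠ 0 := by
    intro h0
    have : (N.map (Int.cast : ℤ → ℝ)).det = 0 := by rw [← hdetcast, h0]; simp
    exact (Matrix.isUnit_iff_isUnit_det _ |>.mp hunit).ne_zero this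
  have hdet1 : N.det = 1 ∨ N.det = -1 := by
    obtain ⟨s, hs⟩ := hNdet
    cases s with
    | zero => exfalso; apply hdetne; rw [← hs]; rfl
    | pos => left; rw [← hs]; rfl
    | neg => right; rw [← hs]; rfl
  haveI : Invertible N := N.invertibleOfIsUnitDet (Int.isUnit_iff.mpr hdet1)
  -- set up the linear system
  set χ : Fin k → ℤ := fun t => if x t = 1 then 1 else 0 with hχ
  have hχeq : ∀ t, ¬(0 < x t ∧ x t < 1) → x t = (χ t : ℝ) := by
    intro t ht
    have h1 := (hb t).1
    have h2 := (hb t).2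
    rcases eq_or_lt_of_le h1 with h | h
    · have hx0 : x t = 0 := h.symm
      have : ¬ (x t = 1) := by rw [hx0]; norm_num
      simp [hχ, this, hx0]
    · rcases eq_or_lt_of_le h2 with h' | h'
      · simp [hχ, h', if_pos]
      · exact absurd ⟨h, h'⟩ ht
  set g : b → ℤ := fun v =>
    (if S (φ v) = (l (φ v) : ℝ) then l (φ v) else u (φ v)) -
      ∑ t : Fin k, (if 0 < x t ∧ x t < 1 then 0 else A (φ v) t * χ t) with hg
  set y : b → ℝ := fun w => x (e w).1 with hy
  have hNy : (N.map (Int.cast : ℤ → ℝ)).mulVec y = fun v => (g v : ℝ) := by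
    funext v
    have hv : S (φ v) = (l (φ v) : ℝ) ∨ S (φ v) = (u (φ v) : ℝ) := hφT v
    have htv : S (φ v) = ((if S (φ v) = (l (φ v) : ℝ) then l (φ v) else u (φ v) : ℤ) : ℝ) := by
      by_cases h : S (φ v) = (l (φ v) : ℝ)
      · rw [if_pos h]; exact h
      · rw [if_neg h]; exact hv.resolve_left h
    -- mulVec as sum
    have hmv : (N.map (Int.cast : ℤ → ℝ)).mulVec y v
        = ∑ w : b, (A (φ v) (e w).1 : ℝ) * x (e w).1 := by
      simp [Matrix.mulVec, dotProduct, hN, hy, Matrix.map_apply, Matrix.submatrix_apply]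
    rw [hmv]
    -- reindex the sum over σ
    have hre : ∑ w : b, (A (φ v) (e w).1 : ℝ) * x (e w).1
        = ∑ t : σ, (A (φ v) t.1 : ℝ) * x t.1 :=
      Equiv.sum_comp e (fun t : σ => (A (φ v) t.1 : ℝ) * x t.1)
    rw [hre]
    -- split the full sum S (φ v)
    have hall := hsplit (fun t => (A (φ v) t : ℝ) * x t)
    have hnp : ∑ t : {t : Fin k // ¬(0 < x t ∧ x t < 1)}, (A (φ v) t.1 : ℝ) * x t.1
        = ((∑ t : Fin k, (if 0 < x t ∧ x t < 1 then 0 else A (φ v) t * χ t) : ℤ) : ℝ) := by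
      rw [Int.cast_sum]
      rw [← hsplit (fun t => ((if 0 < x t ∧ x t < 1 then 0 else A (φ v) t * χ t : ℤ) : ℝ))]
      have hp0 : ∑ t : σ, ((if 0 < x t.1 ∧ x t.1 < 1 then 0 else A (φ v) t.1 * χ t.1 : ℤ) : ℝ)
          = 0 := by
        apply Finset.sum_eq_zero
        intro t _
        rw [if_pos t.2]
        simp
      rw [hp0, zero_add]
      apply Finset.sum_congr rfl
      intro t _
      rw [if_neg t.2, hχeq t.1 t.2]
      push_cast
      ring
    have hSv : S (φ v) = ∑ t : Fin k, (A (φ v) t : ℝ) * x t := rfl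
    have : ∑ t : σ, (A (φ v) t.1 : ℝ) * x t.1
        = S (φ v) - ∑ t : {t : Fin k // ¬(0 < x t ∧ x t < 1)}, (A (φ v) t.1 : ℝ) * x t.1 := by
      rw [hSv, ← hall]
      ring
    rw [this, hnp, htv, hg]
    push_cast
    ring
  -- invert the system
  have hysol : y = fun w => (((⅟N).mulVec g) w : ℝ) := by
    have h1 : ((⅟N * N : Matrix b b ℤ).map (Int.cast : ℤ → ℝ)).mulVec y = y := by
      rw [invOf_mul_self]
      simp [Matrix.map_one]
    have hmm : ((⅟N * N : Matrix b b ℤ).map (Int.cast : ℤ → ℝ))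
        = (⅟N).map (Int.cast : ℤ → ℝ) * N.map (Int.cast : ℤ → ℝ) := by
      have h := Matrix.map_mul (L := (⅟N : Matrix b b ℤ)) (M := N) (f := Int.castRingHom ℝ)
      simpa using h
    have h2 : ((⅟N * N : Matrix b b ℤ).map (Int.cast : ℤ → ℝ)).mulVec y
        = ((⅟N).map (Int.cast : ℤ → ℝ)).mulVec ((N.map (Int.cast : ℤ → ℝ)).mulVec y) := by
      rw [hmm]
      exact (Matrix.mulVec_mulVec _ _ _).symm
    rw [h2, hNy] at h1
    rw [← h1]
    funext w
    simp only [Matrix.mulVec, dotProduct, Matrix.map_apply]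
    push_cast
    rfl
  -- contradiction: x t₀ is an integer strictly between 0 and 1
  have hxt₀ : x t₀ = ((((⅟N).mulVec g) (e.symm ⟨t₀, ht₀⟩)) : ℝ) := by
    have h := congrFun hysol (e.symm ⟨t₀, ht₀⟩)
    rw [hy] at h
    simp only at h
    rw [Equiv.apply_symm_apply] at h
    exact h
  set q : ℤ := ((⅟N).mulVec g) (e.symm ⟨t₀, ht₀⟩) with hq
  have h1 : (0:ℝ) < (q:ℝ) := hxt₀ ▸ ht₀.1
  have h2 : ((q:ℝ)) < 1 := hxt₀ ▸ ht₀.2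
  have h1' : 0 < q := by exact_mod_cast h1
  have h2' : q < 1 := by exact_mod_cast h2
  omega

section scratch
variable {m k : ℕ} (A : Matrix (Fin m) (Fin k) ℤ) (l u : Fin m → ℤ)


lemma stmt15P_isClosed : IsClosed (stmt15P A l u) := by
  have h1 : stmt15P A l u =
      (⋂ t, (fun x : EuclideanSpace ℝ (Fin k) => x t) ⁻¹' Set.Icc (0:ℝ) 1) ∩
      (⋂ i, (fun x : EuclideanSpace ℝ (Fin k) => ∑ t, (A i t : ℝ) * x t) ⁻¹'
        Set.Icc ((l i : ℝ)) ((u i : ℝ))) := by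
    ext x
    simp [stmt15P, Set.mem_iInter, Set.mem_Icc]
  rw [h1]
  apply IsClosed.inter
  · exact isClosed_iInter fun t => isClosed_Icc.preimage (EuclideanSpace.proj t).continuous
  · refine isClosed_iInter fun i => isClosed_Icc.preimage ?_
    exact continuous_finset_sum _ fun t _ =>
      continuous_const.mul (EuclideanSpace.proj t).continuous

lemma stmt15P_isBounded : Bornology.IsBounded (stmt15P A l u) := by
  rw [Metric.isBounded_iff_subset_closedBall 0]
  refine ⟨Real.sqrt k, fun x hx => ?_⟩
  rw [Metric.mem_closedBall, dist_zero_right, EuclideanSpace.norm_eq]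
  apply Real.sqrt_le_sqrt
  have : ∀ t : Fin k, ‖x t‖ ^ 2 ≤ 1 := by
    intro t
    have h1 := (hx.1 t).1
    have h2 := (hx.1 t).2
    rw [Real.norm_eq_abs, abs_of_nonneg h1]
    nlinarith
  calc ∑ t : Fin k, ‖x t‖ ^ 2 ≤ ∑ _t : Fin k, (1:ℝ) := Finset.sum_le_sum fun t _ => this t
    _ = k := by simp

lemma stmt15P_convex : Convex ℝ (stmt15P A l u) := by
  intro x hx y hy a b ha hb hab
  constructor
  · intro t
    have h1 := hx.1 t
    have h2 := hy.1 t
    have hcoord : (a • x + b • y) t = a * x t + b * y t := by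
      simp [PiLp.add_apply, PiLp.smul_apply, smul_eq_mul]
    rw [hcoord]
    constructor
    · nlinarith [h1.1, h2.1]
    · nlinarith [h1.2, h2.2]
  · intro i
    have hsum : ∑ t, (A i t : ℝ) * (a • x + b • y) t
        = a * (∑ t, (A i t : ℝ) * x t) + b * (∑ t, (A i t : ℝ) * y t) := by
      simp only [PiLp.add_apply, PiLp.smul_apply, smul_eq_mul, mul_add, Finset.sum_add_distrib,
        Finset.mul_sum]
      congr 1 <;> exact Finset.sum_congr rfl fun t _ => by ring
    rw [hsum]
    have h1 := hx.2 i
    have h2 := hy.2 i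
    constructor
    · calc ((l i : ℝ)) = a * l i + b * l i := by rw [← add_mul, hab, one_mul]
        _ ≤ _ := add_le_add (mul_le_mul_of_nonneg_left h1.1 ha)
            (mul_le_mul_of_nonneg_left h2.1 hb)
    · calc a * (∑ t, (A i t : ℝ) * x t) + b * (∑ t, (A i t : ℝ) * y t)
          ≤ a * u i + b * u i := add_le_add (mul_le_mul_of_nonneg_left h1.2 ha)
            (mul_le_mul_of_nonneg_left h2.2 hb)
        _ = (u i : ℝ) := by rw [← add_mul, hab, one_mul]

end scratch


/-- For any totally unimodular matrix `M` and any collection of distinct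
columns `c₁, …, c_k` of `M`, there are signs `ε₁, …, ε_k ∈ {−1,+1}` such that every entry of
`ε₁c₁ + ⋯ + ε_k c_k` lies in `{-1,0,1}`. -/
theorem stmt15 (m n k : ℕ) (M : Matrix (Fin m) (Fin n) ℤ)
    (hTU : M.IsTotallyUnimodular)
    (c : Fin k → Fin n) (hc : Function.Injective c) :
    ∃ ε : Fin k → ℤ, (∀ t, ε t = 1 ∨ ε t = -1) ∧
      ∀ i : Fin m, (∑ t : Fin k, ε t * M i (c t)) ∈ ({-1, 0, 1} : Set ℤ) := by
  classical
  set A : Matrix (Fin m) (Fin k) ℤ := M.submatrix id c with hA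
  have hATU : A.IsTotallyUnimodular := hTU.submatrix id c
  set d : Fin m → ℤ := fun i => ∑ t, A i t with hd
  set l : Fin m → ℤ := fun i => d i / 2 with hl
  set u : Fin m → ℤ := fun i => d i / 2 + d i % 2 with hu
  have hkey : ∀ i, 2 * l i ≤ d i ∧ d i ≤ 2 * u i ∧ u i ≤ l i + 1 ∧ l i = d i / 2 ∧
      u i = d i / 2 + d i % 2 := by
    intro i
    refine ⟨?_, ?_, ?_, ?_, ?_⟩ <;> simp only [hl, hu] <;> omega
  -- the half point
  have hx₀ : (WithLp.toLp 2 (fun _ => (1:ℝ)/2) : EuclideanSpace ℝ (Fin k)) ∈ stmt15P A l u := by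
    constructor
    · intro t; norm_num
    · intro i
      have hsum : ∑ t, (A i t : ℝ) * ((1:ℝ)/2) = (d i : ℝ)/2 := by
        rw [← Finset.sum_mul, hd]
        push_cast
        ring
      simp only [WithLp.ofLp_toLp]
      rw [hsum]
      have h1 : ((2 * l i : ℤ) : ℝ) ≤ ((d i : ℤ) : ℝ) := by exact_mod_cast (hkey i).1
      have h2 : ((d i : ℤ) : ℝ) ≤ ((2 * u i : ℤ) : ℝ) := by exact_mod_cast (hkey i).2.1
      push_cast at h1 h2
      constructor <;> linarith
  have hcomp : IsCompact (stmt15P A l u) :=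
    Metric.isCompact_of_isClosed_isBounded (stmt15P_isClosed A l u) (stmt15P_isBounded A l u)
  obtain ⟨x, hxext⟩ := hcomp.extremePoints_nonempty ⟨_, hx₀⟩
  rw [mem_extremePoints] at hxext
  obtain ⟨hxP, hext⟩ := hxext
  have h01 : ∀ t, x t = 0 ∨ x t = 1 := by
    intro t
    by_contra hcon
    push_neg at hcon
    have hpred : 0 < x t ∧ x t < 1 :=
      ⟨lt_of_le_of_ne (hxP.1 t).1 (Ne.symm hcon.1), lt_of_le_of_ne (hxP.1 t).2 hcon.2⟩
    by_cases hK : ∀ z : EuclideanSpace ℝ (Fin k), (∀ s, ¬(0 < x s ∧ x s < 1) → z s = 0) →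
      (∀ i, ((∑ s, (A i s : ℝ) * x s = l i) ∨ (∑ s, (A i s : ℝ) * x s = u i)) →
        ∑ s, (A i s : ℝ) * z s = 0) → z = 0
    · exact stmt15_caseB A hATU l u x hxP.1 hxP.2 hK t hpred
    · push_neg at hK
      obtain ⟨z, hz1, hz2, hz3⟩ := hK
      have hz1' : ∀ s, ¬(0 < x s ∧ x s < 1) → z s = 0 := fun s hs =>
        hz1 s (fun h0 => le_of_not_gt (fun h1 => hs ⟨h0, h1⟩))
      exact stmt15_caseA A l u x z hxP hz3 hz1' hz2 hext
  -- assemble the signs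
  set χ : Fin k → ℤ := fun t => if x t = 1 then 1 else 0 with hχ
  refine ⟨fun t => 1 - 2 * χ t, ?_, ?_⟩
  · intro t
    by_cases h : x t = 1 <;> simp [hχ, h]
  · intro i
    set v : ℤ := ∑ t, χ t * A i t with hv
    have hsum : ∑ t : Fin k, (1 - 2 * χ t) * M i (c t) = d i - 2 * v := by
      have hterm : ∀ t, (1 - 2 * χ t) * M i (c t) = A i t - 2 * (χ t * A i t) := by
        intro t
        show _ = M i (c t) - 2 * (χ t * M i (c t))
        ring
      rw [Finset.sum_congr rfl fun t _ => hterm t, Finset.sum_sub_distrib, ← Finset.mul_sum,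
        ← hv, hd]
    have hvreal : (v : ℝ) = ∑ t, (A i t : ℝ) * x t := by
      rw [hv]
      push_cast
      apply Finset.sum_congr rfl
      intro t _
      have hxt : x t = (χ t : ℝ) := by
        rcases h01 t with h | h
        · rw [h, hχ]
          simp only
          rw [if_neg (by rw [h]; norm_num)]
          norm_num
        · rw [h, hχ]
          simp only
          rw [if_pos h]
          norm_num
      rw [hxt]
      ring
    have hlv : l i ≤ v ∧ v ≤ u i := by
      have h1 := (hxP.2 i).1
      have h2 := (hxP.2 i).2
      rw [← hvreal] at h1 h2
      exact ⟨by exact_mod_cast h1, by exact_mod_cast h2⟩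
    have hgoal : d i - 2 * v = -1 ∨ d i - 2 * v = 0 ∨ d i - 2 * v = 1 := by
      obtain ⟨e1, e2, e3, e4, e5⟩ := hkey i
      obtain ⟨f1, f2⟩ := hlv
      omega
    simp only [Set.mem_insert_iff, Set.mem_singleton_iff]
    rw [hsum]
    exact hgoal
end
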